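/- Let q = ∃u(q(u)) be a self-join-free Boolean conjunctive query with an acyclic attack graph, (F_1,...,F_n) a topological sort of its attack graph, and db a database instance. Then (i) every superfrugal repair of db is n-minimal, and (ii) every n-minimal repair of db is superfrugal. -/

import Mathlib

open scoped Classical

/-! ## Variables, constants, relation names -/

abbrev Var : Type := ℕ
abbrev RelName : Type := ℕ

/-- A term: a variable or a constant (a non-negative rational). -/
inductive Trm : Type where
  | var : Var → Trm
  | const : ℚ≥0 → Trm
deriving DecidableEq

/-- An atom `R(x̲, y)`: relation name, primary-key arguments, remaining arguments. -/
structure DBAtom : Type where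
  rel : RelName
  keyArgs : List Trm
  nonkeyArgs : List Trm
deriving DecidableEq, Inhabited

/-- A fact: an atom without variables. -/
structure DBFact : Type where
  rel : RelName
  keyArgs : List ℚ≥0
  nonkeyArgs : List ℚ≥0
deriving DecidableEq

def Trm.var? : Trm → Option Var
  | .var v => some v
  | .const _ => none

def Trm.const? : Trm → Option ℚ≥0
  | .var _ => none
  | .const c => some c

def DBAtom.keyVars (F : DBAtom) : Finset Var := (F.keyArgs.filterMap Trm.var?).toFinset

def DBAtom.allVars (F : DBAtom) : Finset Var :=
  ((F.keyArgs ++ F.nonkeyArgs).filterMap Trm.var?).toFinset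

def DBAtom.notkeyVars (F : DBAtom) : Finset Var := F.allVars \ F.keyVars

def qVars (q : List DBAtom) : Finset Var := q.foldr (fun F s => F.allVars ∪ s) ∅

/-- Self-join-free: pairwise distinct relation names. -/
def SelfJoinFree (q : List DBAtom) : Prop := (q.map DBAtom.rel).Nodup

def KeyEqual (f g : DBFact) : Prop := f.rel = g.rel ∧ f.keyArgs = g.keyArgs

def DBConsistent (s : Finset DBFact) : Prop :=
  ∀ f ∈ s, ∀ g ∈ s, KeyEqual f g → f = g

/-- A repair: an inclusion-maximal consistent subset. -/
def IsRepair (db r : Finset DBFact) : Prop :=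
  r ⊆ db ∧ DBConsistent r ∧
    ∀ s : Finset DBFact, r ⊆ s → s ⊆ db → DBConsistent s → s = r

/-! ## Valuations (partial maps from variables to constants) -/

abbrev Assignment : Type := Var → Option ℚ≥0

def Assignment.Dom (θ : Assignment) : Set Var := {v | θ v ≠ none}

def Assignment.ExtendsA (μ θ : Assignment) : Prop :=
  ∀ (v : Var) (c : ℚ≥0), θ v = some c → μ v = some c

noncomputable def Assignment.restrict (θ : Assignment) (S : Set Var) : Assignment :=
  fun v => if v ∈ S then θ v else none

def emptyAssignment : Assignment := fun _ => none

/-- Combination of two valuations (the first takes precedence). -/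
def Assignment.comb (θ μ : Assignment) : Assignment :=
  fun v => (θ v).orElse (fun _ => μ v)

def applyTrm (θ : Assignment) : Trm → Trm
  | .var v => (θ v).elim (Trm.var v) Trm.const
  | .const c => .const c

def applyAtom (θ : Assignment) (F : DBAtom) : DBAtom :=
  ⟨F.rel, F.keyArgs.map (applyTrm θ), F.nonkeyArgs.map (applyTrm θ)⟩

def applyQ (θ : Assignment) (q : List DBAtom) : List DBAtom := q.map (applyAtom θ)

def DBAtom.toFact? (F : DBAtom) : Option DBFact := do
  let ks ← F.keyArgs.mapM Trm.const?
  let ns ← F.nonkeyArgs.mapM Trm.const?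
  pure (DBFact.mk F.rel ks ns)

def AtomIn (s : Finset DBFact) (F : DBAtom) : Prop := ∃ f ∈ s, F.toFact? = some f

/-- `(s, θ) ⊨ q`: θ extends to a valuation over dom(θ) ∪ vars(q) mapping all atoms of q into s. -/
def Entails (s : Finset DBFact) (θ : Assignment) (q : List DBAtom) : Prop :=
  ∃ μ : Assignment, μ.Dom = θ.Dom ∪ ↑(qVars q) ∧ μ.ExtendsA θ ∧
    ∀ F ∈ q, AtomIn s (applyAtom μ F)

/-! ## Functional dependencies -/

def FDSatT (N : Set (Var → ℚ≥0)) (X Y : Finset Var) : Prop :=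
  ∀ t₁ ∈ N, ∀ t₂ ∈ N, (∀ x ∈ X, t₁ x = t₂ x) → ∀ y ∈ Y, t₁ y = t₂ y

/-- Standard logical implication of functional dependencies. -/
def FDImp (fds : Set (Finset Var × Finset Var)) (X Y : Finset Var) : Prop :=
  ∀ N : Set (Var → ℚ≥0), (∀ fd ∈ fds, FDSatT N fd.1 fd.2) → FDSatT N X Y

def FDSet (q : List DBAtom) : Set (Finset Var × Finset Var) :=
  {p | ∃ F ∈ q, p = (F.keyVars, F.allVars)}

def keycl (F : DBAtom) (q : List DBAtom) : Set Var :=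
  {x | x ∈ qVars q ∧ FDImp (FDSet (q.erase F)) F.keyVars {x}}

/-! ## Attacks and the attack graph -/

def AdjIn (q : List DBAtom) (a b : Var) : Prop :=
  ∃ G ∈ q, a ∈ G.allVars ∧ b ∈ G.allVars

/-- Atom F attacks variable x in q. -/
def AttacksVar (q : List DBAtom) (F : DBAtom) (x : Var) : Prop :=
  ∃ l : List Var, (∀ v ∈ l, v ∉ keycl F q) ∧
    (∃ h, l.head? = some h ∧ h ∈ F.notkeyVars) ∧
    l.getLast? = some x ∧ l.Chain' (AdjIn q)

def AttacksAtom (q : List DBAtom) (F G : DBAtom) : Prop :=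
  ∃ x ∈ G.allVars, AttacksVar q F x

def Unattacked (q : List DBAtom) (v : Var) : Prop := ∀ F ∈ q, ¬ AttacksVar q F v

/-- The list order of q is a topological sort of its (hence acyclic) attack graph. -/
def IsTopoSort (q : List DBAtom) : Prop :=
  ∀ i j : Fin q.length, q.get i ≠ q.get j →
    AttacksAtom q (q.get i) (q.get j) → (i : ℕ) < (j : ℕ)

/-! ## Embeddings and ∀embeddings (relative to the list order as topological sort) -/

def uVars (q : List DBAtom) (ℓ : ℕ) : Finset Var := qVars (q.take ℓ)

def headKey : List DBAtom → Finset Var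
  | [] => ∅
  | F :: _ => F.keyVars

/-- ℓ-embedding of q in db. -/
def IsLEmb (q : List DBAtom) (db : Finset DBFact) (ℓ : ℕ) (θ : Assignment) : Prop :=
  θ.Dom = ↑(uVars q ℓ) ∧ Entails db θ q

/-- ℓ-∀embedding of q in db. -/
def IsForallEmb (q : List DBAtom) (db : Finset DBFact) : ℕ → Assignment → Prop
  | 0, θ => IsLEmb q db 0 θ ∧ ∀ r, IsRepair db r → Entails r emptyAssignment q
  | (ℓ + 1), θ =>
      IsLEmb q db (ℓ + 1) θ ∧
      (∀ r, IsRepair db r →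
        Entails r (θ.restrict (↑(uVars q ℓ) ∪ ↑(headKey (q.drop ℓ)))) (q.drop ℓ)) ∧
      IsForallEmb q db ℓ (θ.restrict ↑(uVars q ℓ))

/-- An embedding of q in s: a valuation over vars(q) mapping all atoms of q into s. -/
def IsEmbedding (q : List DBAtom) (s : Finset DBFact) (θ : Assignment) : Prop :=
  θ.Dom = ↑(qVars q) ∧ ∀ F ∈ q, AtomIn s (applyAtom θ F)

/-- Superfrugal repair: every embedding of q in r is a ∀embedding of q in db. -/
def Superfrugal (q : List DBAtom) (db r : Finset DBFact) : Prop :=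
  IsRepair db r ∧ ∀ θ, IsEmbedding q r θ → IsForallEmb q db q.length θ

/-! ## FD satisfaction by sets of valuations; maximal consistent subsets (MCS) -/

def AgreeOn (θ₁ θ₂ : Assignment) (X : Finset Var) : Prop := ∀ x ∈ X, θ₁ x = θ₂ x

def SatFD (N : Set Assignment) (X Y : Finset Var) : Prop :=
  ∀ θ₁ ∈ N, ∀ θ₂ ∈ N, AgreeOn θ₁ θ₂ X → AgreeOn θ₁ θ₂ Y

def SatFDs (N : Set Assignment) (q : List DBAtom) : Prop :=
  ∀ fd ∈ FDSet q, SatFD N fd.1 fd.2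

/-- Maximal consistent subset of a set M of embeddings. -/
def IsMCS (q : List DBAtom) (M N : Set Assignment) : Prop :=
  N ⊆ M ∧ SatFDs N q ∧ ∀ N', N ⊆ N' → N' ⊆ M → SatFDs N' q → N' = N

/-! ## Aggregate operators -/

structure AggOp : Type where
  app : Multiset ℚ≥0 → ℚ
  nonneg : ∀ X : Multiset ℚ≥0, X ≠ 0 → 0 ≤ app X

noncomputable def AggOp.appNN (A : AggOp) (X : Multiset ℚ≥0) : ℚ≥0 := (A.app X).toNNRat

def AggOp.Assoc (A : AggOp) : Prop :=
  ∀ X Y : Multiset ℚ≥0, X ≠ 0 → A.app (X + Y) = A.app (A.appNN X ::ₘ Y)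

def AggOp.Mono (A : AggOp) : Prop :=
  ∀ x x' : List ℚ≥0, x ≠ [] → List.Forall₂ (· ≤ ·) x x' →
    ∀ Y : Multiset ℚ≥0, A.app ↑x ≤ A.app (↑x' + Y)

def evalTrm (θ : Assignment) : Trm → ℚ≥0
  | .var v => (θ v).getD 0
  | .const c => c

/-- The multiset of r-values over a (finite) set of valuations. -/
noncomputable def valsOf (N : Set Assignment) (r : Trm) : Multiset ℚ≥0 :=
  if h : N.Finite then h.toFinset.val.map (fun θ => evalTrm θ r) else 0

/-- Primitive numerical term: a (numerical) variable of the query, or a constant. -/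
def PrimTerm (q : List DBAtom) (r : Trm) : Prop :=
  (∃ v, r = Trm.var v ∧ v ∈ qVars q) ∨ (∃ c, r = Trm.const c)

/-! ## Branches and ∀key-embeddings -/

/-- γ is a branch of the ℓ-∀embedding θ. -/
def IsBranch (q : List DBAtom) (db : Finset DBFact) (ℓ : ℕ) (θ γ : Assignment) : Prop :=
  γ.ExtendsA θ ∧
  (∀ v ∈ γ.Dom \ θ.Dom, Unattacked (applyQ θ (q.drop ℓ)) v) ∧
  (∃ μ, IsForallEmb q db q.length μ ∧ μ.ExtendsA γ)

/-- γ is an (ℓ+1)-∀key-embedding: a branch of θ with domain dom(θ) ∪ key(F_{ℓ+1}). -/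
def IsKeyEmb (q : List DBAtom) (db : Finset DBFact) (ℓ : ℕ) (θ γ : Assignment) : Prop :=
  IsBranch q db ℓ θ γ ∧ γ.Dom = θ.Dom ∪ ↑(headKey (q.drop ℓ))

/-- M(θ): all ∀embeddings of q in db extending θ. -/
def Mset (q : List DBAtom) (db : Finset DBFact) (θ : Assignment) : Set Assignment :=
  {μ | IsForallEmb q db q.length μ ∧ μ.ExtendsA θ}

/-! ## Weakly connected components of the attack graph -/

def UndirectedEdge (p : List DBAtom) (F G : DBAtom) : Prop :=
  F ∈ p ∧ G ∈ p ∧ (AttacksAtom p F G ∨ AttacksAtom p G F)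

/-- S is a maximal weakly connected component of the attack graph of p. -/
def IsWCC (p : List DBAtom) (S : Set DBAtom) : Prop :=
  ∃ F₀ ∈ p, S = {G | Relation.ReflTransGen (UndirectedEdge p) F₀ G}

/-! ## rifi, sequential proofs, n-minimality -/

/-- rifi(q, s, V): valuations over V extending to a valuation over vars(q) mapping q into s. -/
def rifi (q : List DBAtom) (s : Finset DBFact) (V : Finset Var) : Set Assignment :=
  {θ | θ.Dom = ↑V ∧ ∃ μ : Assignment, μ.Dom = ↑(qVars q) ∧ μ.ExtendsA θ ∧
      ∀ F ∈ q, AtomIn s (applyAtom μ F)}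

/-- A sequential proof of FD(p) ⊨ Z → w. -/
def IsSeqProof (p : List DBAtom) (Z : Finset Var) (w : Var) (l : List DBAtom) : Prop :=
  (∀ F ∈ l, F ∈ p) ∧
  (∀ i : Fin l.length, (l.get i).keyVars ⊆ Z ∪ qVars (l.take i.1)) ∧
  w ∈ Z ∪ qVars l

/-- n-minimal repair (with X = vars(q)). -/
def NMinimal (q : List DBAtom) (db r : Finset DBFact) : Prop :=
  IsRepair db r ∧
  ¬ ∃ s : Finset DBFact, IsRepair db s ∧
      (∀ θ, IsEmbedding q s θ → IsEmbedding q r θ) ∧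
      (∃ μ, IsEmbedding q r μ ∧ ¬ IsEmbedding q s μ)

/-! ## Descending chains for aggregate operators -/

def DescChain {α β : Type*} [LT β] (F : Multiset α → β) (s t : α) : Prop :=
  ∀ i : ℕ, F (s ::ₘ Multiset.replicate (i + 1) t) < F (s ::ₘ Multiset.replicate i t)

def BoundedBy {α β : Type*} [LT β] (F : Multiset α → β) (s t : α) (m : ℕ → α) : Prop :=
  ∀ i j : ℕ, 1 ≤ j → ∀ k' k : ℕ, k' ≤ k → k ≤ i →
    F (s ::ₘ Multiset.replicate k' t) <
      F (Multiset.replicate j (m i) + (s ::ₘ Multiset.replicate k t))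

def HasBoundedDescChain {α β : Type*} [LT β] (F : Multiset α → β) : Prop :=
  ∃ s t, DescChain F s t ∧ ∃ m : ℕ → α, BoundedBy F s t m


/-!
Everything is transported to total valuations `Var → ℚ≥0`, for which condition (i) of an
`(j+1)`-∀embedding `θ` says: every repair admits an extension of `θ` restricted to
`u_j ∪ key(F_{j+1})` embedding `F_{j+1}, …, F_n`.

(i) Let `r` be superfrugal, `s` a repair all of whose embeddings are embeddings of `r`, and `μ`
an embedding of `r`. The conditions of the ∀embedding `μ`, applied to `s`, move `μ` into `s` one
atom at a time: the extension at level `j` embeds all of `q` into `s`, hence into `r`, and it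
agrees with `μ` on the key of `F_{j+1}`, so consistency of `r` makes it agree with `μ` on all of
`F_{j+1}`.

(ii) Let `r` be `n`-minimal and `θ` an embedding of `r`. Condition (i) at level `k` is proved for
every repair `t` by induction on `|t \ r|`. If it failed for `t`, `n`-minimality would give an
embedding `μ` of `t` that is not one of `r`, with some `μ(F) ∈ t \ r`; exchanging `μ(F)` for
its key-equal fact of `r` gives a repair closer to `r`, with an extension `κ`. Either `κ` already
lands in `t`, or `κ(F)` is the new fact; then `κ` and `μ` agree on `key(F)`, hence by the
functional dependencies of `q \ {F}` on every variable not attacked by `F`, and resetting the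
attacked variables to their `μ`-values yields an extension into `t`. Since `F` comes at or after
position `k + 1` in the topological sort, it attacks none of the prescribed variables.
-/

namespace Trm

def eval (κ : Var → ℚ≥0) : Trm → ℚ≥0
  | .var v => κ v
  | .const c => c

lemma var?_eq_some {a : Trm} {v : Var} : a.var? = some v ↔ a = .var v := by
  cases a <;> simp [var?]

lemma forall_eval_eq_iff {l : List Trm} {κ μ : Var → ℚ≥0} :
    (∀ a ∈ l, eval κ a = eval μ a) ↔ ∀ v, Trm.var v ∈ l → κ v = μ v := by
  refine ⟨fun h v hv => h _ hv, ?_⟩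
  rintro h (v | c) ha
  exacts [h v ha, rfl]

end Trm

namespace DBAtom

variable {F : DBAtom} {v : Var} {κ μ : Var → ℚ≥0}

def ground (F : DBAtom) (κ : Var → ℚ≥0) : DBFact :=
  ⟨F.rel, F.keyArgs.map (Trm.eval κ), F.nonkeyArgs.map (Trm.eval κ)⟩

@[simp] lemma rel_ground : (F.ground κ).rel = F.rel := rfl

lemma mem_keyVars : v ∈ F.keyVars ↔ Trm.var v ∈ F.keyArgs := by
  simp [keyVars, Trm.var?_eq_some]

lemma mem_allVars : v ∈ F.allVars ↔ Trm.var v ∈ F.keyArgs ∨ Trm.var v ∈ F.nonkeyArgs := by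
  simp [allVars, Trm.var?_eq_some]

lemma keyVars_subset_allVars : F.keyVars ⊆ F.allVars :=
  fun _ hv => mem_allVars.2 (.inl (mem_keyVars.1 hv))

lemma keyEqual_ground_iff : KeyEqual (F.ground κ) (F.ground μ) ↔ Set.EqOn κ μ F.keyVars := by
  simp [KeyEqual, ground, Trm.forall_eval_eq_iff, mem_keyVars, Set.EqOn]

lemma ground_eq_ground_iff : F.ground κ = F.ground μ ↔ Set.EqOn κ μ F.allVars := by
  simp [ground, Trm.forall_eval_eq_iff, mem_allVars, Set.EqOn, or_imp, forall_and]

end DBAtom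

lemma mem_qVars {q : List DBAtom} {v : Var} : v ∈ qVars q ↔ ∃ F ∈ q, v ∈ F.allVars := by
  induction q with
  | nil => simp [qVars]
  | cons F q ih => simp [qVars, ← ih]

lemma allVars_subset_qVars {q : List DBAtom} {F : DBAtom} (hF : F ∈ q) :
    F.allVars ⊆ qVars q :=
  fun _ hv => mem_qVars.2 ⟨F, hF, hv⟩

namespace Assignment

variable {θ : Assignment} {κ : Var → ℚ≥0} {S T : Set Var} {v : Var}

def total (θ : Assignment) : Var → ℚ≥0 := fun v => (θ v).getD 0

def ofTotal (κ : Var → ℚ≥0) : Assignment := fun v => some (κ v)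

lemma mem_Dom : v ∈ θ.Dom ↔ (θ v).isSome := by
  simp [Dom, Option.isSome_iff_ne_none]

lemma Dom_restrict : (θ.restrict S).Dom = S ∩ θ.Dom := by
  ext v
  by_cases hv : v ∈ S <;> simp [restrict, Dom, hv]

lemma restrict_restrict_of_subset (h : S ⊆ T) : (θ.restrict T).restrict S = θ.restrict S := by
  funext v
  by_cases hv : v ∈ S
  · simp [restrict, hv, h hv]
  · simp [restrict, hv]

lemma restrict_eq_self (h : θ.Dom ⊆ S) : θ.restrict S = θ := by
  funext v
  by_cases hv : v ∈ S
  · simp [restrict, hv]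
  · have : v ∉ θ.Dom := fun hd => hv (h hd)
    simp_all [restrict, Dom]

lemma total_restrict_of_mem (h : v ∈ S) : (θ.restrict S).total v = θ.total v := by
  simp [total, restrict, h]

lemma Dom_ofTotal_restrict : ((ofTotal κ).restrict S).Dom = S := by
  rw [Dom_restrict]
  simp [Dom, ofTotal]

lemma eqOn_total_ofTotal_restrict : Set.EqOn ((ofTotal κ).restrict S).total κ S :=
  fun _ hv => by simp [total, restrict, ofTotal, hv]

end Assignment

lemma Trm.mapM_const?_map_applyTrm {θ : Assignment} {l : List Trm}
    (h : ∀ v, Trm.var v ∈ l → v ∈ θ.Dom) :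
    (l.map (applyTrm θ)).mapM Trm.const? = some (l.map (Trm.eval θ.total)) := by
  induction l with
  | nil => rfl
  | cons a l ih =>
    have ha : (applyTrm θ a).const? = some (a.eval θ.total) := by
      cases a with
      | const c => rfl
      | var v =>
        obtain ⟨c, hc⟩ := Option.isSome_iff_exists.1 (Assignment.mem_Dom.1 (h v (by simp)))
        simp [applyTrm, hc, Trm.eval, Trm.const?, Assignment.total]
    simp [ha, ih (fun v hv => h v (by simp [hv]))]

lemma atomIn_applyAtom_iff {s : Finset DBFact} {θ : Assignment} {F : DBAtom}
    (h : ↑F.allVars ⊆ θ.Dom) : AtomIn s (applyAtom θ F) ↔ F.ground θ.total ∈ s := by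
  have hfact : (applyAtom θ F).toFact? = some (F.ground θ.total) := by
    simp [DBAtom.toFact?, applyAtom, DBAtom.ground,
      Trm.mapM_const?_map_applyTrm (θ := θ) (l := F.keyArgs)
        (fun v hv => h (DBAtom.mem_allVars.2 (.inl hv))),
      Trm.mapM_const?_map_applyTrm (θ := θ) (l := F.nonkeyArgs)
        (fun v hv => h (DBAtom.mem_allVars.2 (.inr hv)))]
  simp [AtomIn, hfact]

def Embeds (p : List DBAtom) (s : Finset DBFact) (κ : Var → ℚ≥0) : Prop :=
  ∀ F ∈ p, F.ground κ ∈ s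

/-- `(s, θ|S) ⊨ p`, stated for total valuations. -/
def ExtendsInto (p : List DBAtom) (s : Finset DBFact) (θ : Var → ℚ≥0) (S : Set Var) : Prop :=
  ∃ κ, Set.EqOn κ θ S ∧ Embeds p s κ

lemma Embeds.mono {p p' : List DBAtom} {s : Finset DBFact} {κ : Var → ℚ≥0} (h : Embeds p s κ)
    (hp : p' ⊆ p) : Embeds p' s κ :=
  fun G hG => h G (hp hG)

section Translation

open Assignment

variable {p q : List DBAtom} {r s : Finset DBFact} {θ : Assignment} {S : Set Var}

lemma entails_iff_extendsInto : Entails s θ p ↔ ExtendsInto p s θ.total θ.Dom := by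
  constructor
  · rintro ⟨μ, hμD, hμθ, hμp⟩
    refine ⟨μ.total, fun v hv => ?_, fun F hF => ?_⟩
    · obtain ⟨c, hc⟩ := Option.isSome_iff_exists.1 (mem_Dom.1 hv)
      simp [total, hc, hμθ v c hc]
    · refine (atomIn_applyAtom_iff ?_).1 (hμp F hF)
      rw [hμD]
      exact (Finset.coe_subset.2 (allVars_subset_qVars hF)).trans Set.subset_union_right
  · rintro ⟨κ, hκθ, hκp⟩
    set D := θ.Dom ∪ ↑(qVars p)
    refine ⟨(ofTotal κ).restrict D, Dom_ofTotal_restrict, fun v c hc => ?_, fun F hF => ?_⟩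
    · have hv : v ∈ θ.Dom := by simp [Dom, hc]
      have : κ v = c := by simpa [total, hc] using hκθ hv
      simp [restrict, ofTotal, D, hv, this]
    · have hFD : ↑F.allVars ⊆ D :=
        (Finset.coe_subset.2 (allVars_subset_qVars hF)).trans Set.subset_union_right
      rw [atomIn_applyAtom_iff (Dom_ofTotal_restrict ▸ hFD),
        DBAtom.ground_eq_ground_iff.2 ((eqOn_total_ofTotal_restrict).mono hFD)]
      exact hκp F hF

lemma entails_restrict_iff (hS : S ⊆ θ.Dom) :
    Entails s (θ.restrict S) p ↔ ExtendsInto p s θ.total S := by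
  rw [entails_iff_extendsInto, Dom_restrict, Set.inter_eq_left.2 hS]
  have : Set.EqOn (θ.restrict S).total θ.total S := fun _ hv => total_restrict_of_mem hv
  exact exists_congr fun κ => and_congr_left fun _ =>
    ⟨fun h => h.trans this, fun h => h.trans this.symm⟩

lemma isEmbedding_iff : IsEmbedding q s θ ↔ θ.Dom = ↑(qVars q) ∧ Embeds q s θ.total := by
  refine and_congr_right fun hD => forall₂_congr fun F hF => atomIn_applyAtom_iff ?_
  rw [hD]
  exact Finset.coe_subset.2 (allVars_subset_qVars hF)

lemma isEmbedding_ofTotal_restrict {κ : Var → ℚ≥0} :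
    IsEmbedding q s ((ofTotal κ).restrict ↑(qVars q)) ↔ Embeds q s κ := by
  have hground : ∀ F ∈ q, F.ground ((ofTotal κ).restrict ↑(qVars q)).total = F.ground κ :=
    fun F hF => DBAtom.ground_eq_ground_iff.2
      (eqOn_total_ofTotal_restrict.mono (Finset.coe_subset.2 (allVars_subset_qVars hF)))
  rw [isEmbedding_iff, and_iff_right Dom_ofTotal_restrict]
  exact forall₂_congr fun F hF => by rw [hground F hF]

lemma IsEmbedding.mono (h : IsEmbedding q r θ) (hrs : r ⊆ s) : IsEmbedding q s θ :=
  ⟨h.1, fun F hF => have ⟨f, hf, he⟩ := h.2 F hF; ⟨f, hrs hf, he⟩⟩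

lemma embeds_imp_of_isEmbedding_imp
    (h : ∀ θ, IsEmbedding q s θ → IsEmbedding q r θ) (κ : Var → ℚ≥0) :
    Embeds q s κ → Embeds q r κ := by
  simpa only [isEmbedding_ofTotal_restrict] using h ((ofTotal κ).restrict ↑(qVars q))

end Translation

section Repair

variable {db r t : Finset DBFact} {f g h : DBFact}

lemma KeyEqual.symm (hfg : KeyEqual f g) : KeyEqual g f := ⟨hfg.1.symm, hfg.2.symm⟩

lemma KeyEqual.trans (hfg : KeyEqual f g) (hgh : KeyEqual g h) : KeyEqual f h :=
  ⟨hfg.1.trans hgh.1, hfg.2.trans hgh.2⟩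

lemma isRepair_iff :
    IsRepair db r ↔ r ⊆ db ∧ DBConsistent r ∧ ∀ g ∈ db, ∃ c ∈ r, KeyEqual c g := by
  refine ⟨fun ⟨hsub, hcons, hmax⟩ => ⟨hsub, hcons, fun g hg => ?_⟩,
    fun ⟨hsub, hcons, hcover⟩ => ⟨hsub, hcons, fun s hrs hs hscons => ?_⟩⟩
  · by_contra! hno
    have hins : DBConsistent (insert g r) := by
      intro a ha b hb hab
      simp only [Finset.mem_insert] at ha hb
      rcases ha with rfl | ha <;> rcases hb with rfl | hb
      · rfl
      · exact absurd hab.symm (hno b hb)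
      · exact absurd hab (hno a ha)
      · exact hcons a ha b hb hab
    have hgr : g ∈ r := hmax _ (Finset.subset_insert g r) (Finset.insert_subset hg hsub) hins ▸
      Finset.mem_insert_self g r
    exact hno g hgr ⟨rfl, rfl⟩
  · refine Finset.Subset.antisymm (fun g hg => ?_) hrs
    obtain ⟨c, hc, hcg⟩ := hcover g (hs hg)
    exact hscons c (hrs hc) g hg hcg ▸ hc

lemma IsRepair.exists_keyEqual (hr : IsRepair db r) (hg : g ∈ db) : ∃ c ∈ r, KeyEqual c g :=
  (isRepair_iff.1 hr).2.2 g hg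

lemma IsRepair.exchange (ht : IsRepair db t) (hh : h ∈ t) (hf : f ∈ db) (hfh : KeyEqual f h) :
    IsRepair db (insert f (t.erase h)) := by
  obtain ⟨hsub, hcons, hcover⟩ := isRepair_iff.1 ht
  refine isRepair_iff.2 ⟨Finset.insert_subset hf ((Finset.erase_subset h t).trans hsub), ?_, ?_⟩
  · have hne : ∀ b ∈ t.erase h, ¬KeyEqual f b := fun b hb hfb =>
      (Finset.mem_erase.1 hb).1 (hcons b (Finset.mem_of_mem_erase hb) h hh (hfb.symm.trans hfh))
    intro a ha b hb hab
    simp only [Finset.mem_insert] at ha hb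
    rcases ha with rfl | ha <;> rcases hb with rfl | hb
    · rfl
    · exact absurd hab (hne b hb)
    · exact absurd hab.symm (hne a ha)
    · exact hcons a (Finset.mem_of_mem_erase ha) b (Finset.mem_of_mem_erase hb) hab
  · intro g hg
    obtain ⟨c, hc, hcg⟩ := hcover g hg
    by_cases hch : c = h
    · exact ⟨f, Finset.mem_insert_self f _, hfh.trans (hch ▸ hcg)⟩
    · exact ⟨c, Finset.mem_insert_of_mem (Finset.mem_erase.2 ⟨hch, hc⟩), hcg⟩

lemma IsRepair.exists_exchange (ht : IsRepair db t) (hr : IsRepair db r) (hh : h ∈ t \ r) :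
    ∃ f ∈ r, KeyEqual f h ∧
      ∃ t', IsRepair db t' ∧ (t' \ r).card < (t \ r).card ∧ t' ⊆ insert f t := by
  obtain ⟨hht, hhr⟩ := Finset.mem_sdiff.1 hh
  obtain ⟨f, hfr, hfh⟩ := hr.exists_keyEqual (ht.1 hht)
  refine ⟨f, hfr, hfh, insert f (t.erase h), ht.exchange hht (hr.1 hfr) hfh, ?_,
    Finset.insert_subset_insert f (Finset.erase_subset h t)⟩
  rw [Finset.insert_sdiff_of_mem _ hfr, Finset.erase_sdiff_comm]
  exact Finset.card_erase_lt_of_mem hh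

lemma IsRepair.mem_of_forall_sdiff_rel_ne (ht : IsRepair db t) (hr : IsRepair db r)
    (hg : g ∈ r) (hrel : ∀ h ∈ t \ r, h.rel ≠ g.rel) : g ∈ t := by
  obtain ⟨c, hct, hcg⟩ := ht.exists_keyEqual (hr.1 hg)
  by_cases hcr : c ∈ r
  · exact hr.2.1 c hcr g hg hcg ▸ hct
  · exact absurd hcg.1 (hrel c (Finset.mem_sdiff.2 ⟨hct, hcr⟩))

end Repair

section Query

variable {q : List DBAtom} {k : ℕ} {F G : DBAtom} {v : Var}

lemma SelfJoinFree.nodup (hsjf : SelfJoinFree q) : q.Nodup := List.Nodup.of_map _ hsjf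

lemma SelfJoinFree.eq_of_rel_eq (hsjf : SelfJoinFree q) (hF : F ∈ q) (hG : G ∈ q)
    (h : F.rel = G.rel) : F = G :=
  List.inj_on_of_nodup_map hsjf hF hG h

lemma uVars_subset_qVars : uVars q k ⊆ qVars q := fun _ hv =>
  have ⟨F, hF, hvF⟩ := mem_qVars.1 hv
  mem_qVars.2 ⟨F, List.mem_of_mem_take hF, hvF⟩

lemma uVars_subset_uVars_succ : uVars q k ⊆ uVars q (k + 1) := fun _ hv =>
  have ⟨F, hF, hvF⟩ := mem_qVars.1 hv
  mem_qVars.2 ⟨F, List.take_subset_take_left q k.le_succ hF, hvF⟩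

lemma headKey_drop_subset_uVars_succ : headKey (q.drop k) ⊆ uVars q (k + 1) := by
  rcases lt_or_ge k q.length with hk | hk
  · rw [List.drop_eq_getElem_cons hk]
    refine DBAtom.keyVars_subset_allVars.trans (allVars_subset_qVars ?_)
    exact List.mem_take_iff_getElem.2 ⟨k, by omega, rfl⟩
  · simp [List.drop_eq_nil_of_le hk, headKey]

lemma allVars_subset_uVars (hG : G ∈ q) (hGk : G ∉ q.drop k) : G.allVars ⊆ uVars q k := by
  rw [← List.take_append_drop k q, List.mem_append] at hG
  exact allVars_subset_qVars (hG.resolve_right hGk)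

lemma uVars_length : uVars q q.length = qVars q := by
  rw [uVars, List.take_length]

lemma keyVars_subset_keycl (hF : F ∈ q) : ↑F.keyVars ⊆ keycl F q := fun v hv =>
  ⟨allVars_subset_qVars hF (DBAtom.keyVars_subset_allVars hv),
    fun _ _ _ _ _ _ hag _ hy => Finset.mem_singleton.1 hy ▸ hag v hv⟩

lemma AttacksVar.notMem_keycl (h : AttacksVar q F v) : v ∉ keycl F q :=
  have ⟨_, hl, _, hlast, _⟩ := h
  hl v (List.mem_of_getLast? hlast)

lemma attacksVar_of_mem_notkeyVars (hv : v ∈ F.notkeyVars) (hvF : v ∉ keycl F q) :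
    AttacksVar q F v :=
  ⟨[v], by simpa using hvF, ⟨v, rfl, hv⟩, rfl, List.isChain_singleton v⟩

lemma AttacksVar.of_adjIn {x : Var} (h : AttacksVar q F v) (hvx : AdjIn q v x)
    (hx : x ∉ keycl F q) : AttacksVar q F x := by
  obtain ⟨l, hl, ⟨a, ha, haF⟩, hlast, hchain⟩ := h
  have hne : l ≠ [] := by rintro rfl; cases ha
  refine ⟨l ++ [x], ?_, ⟨a, by simp [List.head?_append_of_ne_nil _ hne, ha], haF⟩, by simp, ?_⟩
  · simpa [or_imp, forall_and] using ⟨hl, hx⟩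
  · refine List.isChain_append.2 ⟨hchain, List.isChain_singleton x, ?_⟩
    simp only [hlast, Option.mem_def, Option.some.injEq, List.head?_cons]
    rintro _ rfl _ rfl
    exact hvx

lemma mem_keycl_of_not_attacksVar (hF : F ∈ q) (hG : G ∈ q)
    (hGF : G = F ∨ ∃ w ∈ G.allVars, AttacksVar q F w) (hv : v ∈ G.allVars)
    (hna : ¬AttacksVar q F v) : v ∈ keycl F q := by
  by_contra hcl
  rcases hGF with rfl | ⟨w, hw, hwa⟩
  · by_cases hkey : v ∈ G.keyVars
    · exact hcl (keyVars_subset_keycl hF hkey)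
    · exact hna (attacksVar_of_mem_notkeyVars (Finset.mem_sdiff.2 ⟨hv, hkey⟩) hcl)
  · exact hna (hwa.of_adjIn ⟨G, hG, hw, hv⟩ hcl)

lemma IsTopoSort.lt_of_attacksAtom (htopo : IsTopoSort q) (hnodup : q.Nodup) {i j : ℕ}
    (hi : i < q.length) (hj : j < q.length) (hij : i ≠ j) (h : AttacksAtom q q[i] q[j]) :
    i < j :=
  htopo ⟨i, hi⟩ ⟨j, hj⟩ (by simpa [hnodup.getElem_inj_iff] using hij) h

lemma IsTopoSort.not_attacksVar (htopo : IsTopoSort q) (hsjf : SelfJoinFree q)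
    (hF : F ∈ q.drop k) (hv : v ∈ (↑(uVars q k) ∪ ↑(headKey (q.drop k)) : Set Var)) :
    ¬AttacksVar q F v := by
  intro hatt
  obtain ⟨j, hj, rfl⟩ := List.mem_drop_iff_getElem.1 hF
  rcases hv with hv | hv
  · obtain ⟨G, hG, hvG⟩ := mem_qVars.1 hv
    obtain ⟨i, hi, rfl⟩ := List.mem_take_iff_getElem.1 hG
    have := htopo.lt_of_attacksAtom hsjf.nodup (by omega) (by omega) (by omega) ⟨v, hvG, hatt⟩
    omega
  · rw [List.drop_eq_getElem_cons (by omega)] at hv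
    rcases Nat.eq_zero_or_pos j with rfl | hj0
    · exact hatt.notMem_keycl (keyVars_subset_keycl (List.getElem_mem _) hv)
    · have := htopo.lt_of_attacksAtom hsjf.nodup (by omega) (by omega) (by omega)
        ⟨v, DBAtom.keyVars_subset_allVars hv, hatt⟩
      omega

end Query

section Forcing

variable {q : List DBAtom} {t : Finset DBFact} {F : DBAtom} {κ μ : Var → ℚ≥0}

lemma eqOn_keycl (ht : DBConsistent t) (hκ : Embeds (q.erase F) t κ)
    (hμ : Embeds (q.erase F) t μ) (hkey : Set.EqOn κ μ F.keyVars) :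
    Set.EqOn κ μ (keycl F q) := by
  rintro x ⟨-, himp⟩
  refine himp {κ, μ} ?_ κ (by simp) μ (by simp) (fun v hv => hkey hv) x
    (Finset.mem_singleton_self x)
  rintro ⟨X, Y⟩ ⟨G, hG, hXY⟩
  obtain ⟨rfl, rfl⟩ := Prod.mk.inj hXY
  have hmem : ∀ τ ∈ ({κ, μ} : Set (Var → ℚ≥0)), G.ground τ ∈ t := by
    rintro τ (rfl | rfl)
    exacts [hκ G hG, hμ G hG]
  intro τ₁ h₁ τ₂ h₂ hag y hy
  exact DBAtom.ground_eq_ground_iff.1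
    (ht _ (hmem τ₁ h₁) _ (hmem τ₂ h₂) (DBAtom.keyEqual_ground_iff.2 fun v hv => hag v hv)) hy

lemma embeds_piecewise_attacksVar (ht : DBConsistent t) (hF : F ∈ q)
    (hκ : Embeds (q.erase F) t κ) (hμ : Embeds q t μ) (hkey : Set.EqOn κ μ F.keyVars) :
    Embeds q t ({x | AttacksVar q F x}.piecewise μ κ) := by
  have hcl := eqOn_keycl ht hκ (hμ.mono (List.erase_subset)) hkey
  intro G hG
  by_cases hGF : G = F ∨ ∃ w ∈ G.allVars, AttacksVar q F w
  · rw [DBAtom.ground_eq_ground_iff.2 fun v hv => ?_]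
    · exact hμ G hG
    by_cases hva : AttacksVar q F v
    · exact Set.piecewise_eq_of_mem {x | AttacksVar q F x} μ κ hva
    · rw [Set.piecewise_eq_of_notMem {x | AttacksVar q F x} μ κ hva]
      exact hcl (mem_keycl_of_not_attacksVar hF hG hGF hv hva)
  · simp only [not_or, not_exists, not_and] at hGF
    rw [DBAtom.ground_eq_ground_iff.2 fun v hv =>
      Set.piecewise_eq_of_notMem {x | AttacksVar q F x} μ κ (hGF.2 v hv)]
    exact hκ G ((List.mem_erase_of_ne hGF.1).2 hG)

end Forcing

section ForallEmbedding

open Assignment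

variable {q : List DBAtom} {db s : Finset DBFact}

/-- Condition (i) in the definition of an `(j+1)`-∀embedding, for a total valuation `θ`. -/
def CertainFrom (q : List DBAtom) (db : Finset DBFact) (θ : Var → ℚ≥0) (j : ℕ) : Prop :=
  ∀ t, IsRepair db t → ExtendsInto (q.drop j) t θ (↑(uVars q j) ∪ ↑(headKey (q.drop j)))

lemma entails_emptyAssignment_iff {p : List DBAtom} :
    Entails s emptyAssignment p ↔ ∃ κ, Embeds p s κ := by
  have : emptyAssignment.Dom = ∅ := by simp [Dom, emptyAssignment]
  simp [entails_iff_extendsInto, ExtendsInto, this]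

lemma isForallEmb_restrict_iff {θ : Assignment} (hθ : IsEmbedding q db θ) (m : ℕ) :
    IsForallEmb q db m (θ.restrict ↑(uVars q m)) ↔
      (∀ t, IsRepair db t → ∃ κ, Embeds q t κ) ∧ ∀ j < m, CertainFrom q db θ.total j := by
  obtain ⟨hD, hθdb⟩ := isEmbedding_iff.1 hθ
  have hsub : ∀ j, (↑(uVars q j) ∪ ↑(headKey (q.drop j)) : Set Var) ⊆ ↑(uVars q (j + 1)) :=
    fun j => Set.union_subset (Finset.coe_subset.2 uVars_subset_uVars_succ)
      (Finset.coe_subset.2 headKey_drop_subset_uVars_succ)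
  have hDom : ∀ j, (↑(uVars q j) : Set Var) ⊆ θ.Dom :=
    fun j => hD ▸ Finset.coe_subset.2 uVars_subset_qVars
  have hlemb : ∀ j, IsLEmb q db j (θ.restrict ↑(uVars q j)) := fun j =>
    ⟨by rw [Dom_restrict, Set.inter_eq_left.2 (hDom j)],
      (entails_restrict_iff (hDom j)).2 ⟨θ.total, Set.eqOn_refl _ _, hθdb⟩⟩
  induction m with
  | zero => simp [IsForallEmb, hlemb 0, entails_emptyAssignment_iff]
  | succ m ih =>
    rw [IsForallEmb, restrict_restrict_of_subset (hsub m),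
      restrict_restrict_of_subset (Finset.coe_subset.2 uVars_subset_uVars_succ),
      Nat.forall_lt_succ_right]
    simp only [ih, CertainFrom, entails_restrict_iff ((hsub m).trans (hDom (m + 1))), hlemb,
      true_and]
    tauto

lemma isForallEmb_iff {θ : Assignment} (hθ : IsEmbedding q db θ) :
    IsForallEmb q db q.length θ ↔ ∀ j < q.length, CertainFrom q db θ.total j := by
  have h := isForallEmb_restrict_iff hθ q.length
  rw [restrict_eq_self (by rw [uVars_length, hθ.1])] at h
  rw [h, and_iff_right_of_imp]
  intro h t ht
  rcases Nat.eq_zero_or_pos q.length with h0 | hpos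
  · exact ⟨θ.total, fun F hF => by simp [List.length_eq_zero_iff.1 h0] at hF⟩
  · obtain ⟨κ, -, hκ⟩ := h 0 hpos t ht
    exact ⟨κ, by simpa using hκ⟩

end ForallEmbedding

section SuperfrugalToMinimal

variable {q : List DBAtom} {r s : Finset DBFact} {μ : Var → ℚ≥0}

lemma embeds_of_forall_extendsInto (hr : DBConsistent r)
    (hsr : ∀ κ, Embeds q s κ → Embeds q r κ) (hμ : Embeds q r μ)
    (hext : ∀ j < q.length, ExtendsInto (q.drop j) s μ (↑(uVars q j) ∪ ↑(headKey (q.drop j)))) :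
    Embeds q s μ := by
  suffices ∀ j ≤ q.length, Embeds (q.take j) s μ by simpa using this q.length le_rfl
  intro j
  induction j with
  | zero => simp [Embeds]
  | succ j ih =>
    intro hj
    obtain ⟨κ, hκμ, hκs⟩ := hext j hj
    have hκ : Embeds q s κ := by
      intro F hF
      by_cases hFj : F ∈ q.drop j
      · exact hκs F hFj
      · rw [DBAtom.ground_eq_ground_iff.2
          (hκμ.mono ((Finset.coe_subset.2 (allVars_subset_uVars hF hFj)).trans
            Set.subset_union_left))]
        rw [← List.take_append_drop j q, List.mem_append] at hF
        exact ih (by omega) F (hF.resolve_right hFj)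
    have hdrop := List.drop_eq_getElem_cons hj
    have hkey : KeyEqual (q[j].ground κ) (q[j].ground μ) :=
      DBAtom.keyEqual_ground_iff.2 (hκμ.mono (by rw [hdrop]; exact Set.subset_union_right))
    have hjs : q[j].ground μ ∈ s :=
      hr _ (hsr κ hκ _ (List.getElem_mem hj)) _ (hμ _ (List.getElem_mem hj)) hkey ▸
        hκs _ (by rw [hdrop]; exact List.mem_cons_self)
    rw [List.take_add_one, List.getElem?_eq_getElem hj]
    intro F hF
    rcases List.mem_append.1 hF with hF | hF
    · exact ih (by omega) F hF
    · simp only [Option.toList_some, List.mem_singleton] at hF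
      exact hF ▸ hjs

theorem Superfrugal.nMinimal {db : Finset DBFact} (h : Superfrugal q db r) :
    NMinimal q db r := by
  refine ⟨h.1, fun ⟨s, hs, hsr, μ, hμr, hμs⟩ => hμs ?_⟩
  have hcert := (isForallEmb_iff (hμr.mono h.1.1)).1 (h.2 μ hμr)
  rw [isEmbedding_iff] at hμr ⊢
  exact ⟨hμr.1, embeds_of_forall_extendsInto h.1.2.1 (embeds_imp_of_isEmbedding_imp hsr) hμr.2
    fun j hj => hcert j hj s hs⟩

end SuperfrugalToMinimal

section MinimalToSuperfrugal

variable {q p : List DBAtom} {db r t : Finset DBFact} {θ : Var → ℚ≥0} {S : Set Var} {k : ℕ}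

lemma NMinimal.exists_embeds_not_embeds (hr : NMinimal q db r) (ht : IsRepair db t)
    (hθr : Embeds q r θ) (hθt : ¬Embeds q t θ) : ∃ μ, Embeds q t μ ∧ ¬Embeds q r μ := by
  by_contra! h
  refine hr.2 ⟨t, ht, fun θ' hθ' => ?_, _, isEmbedding_ofTotal_restrict.2 hθr,
    mt isEmbedding_ofTotal_restrict.1 hθt⟩
  obtain ⟨hD, hθ't⟩ := isEmbedding_iff.1 hθ'
  exact isEmbedding_iff.2 ⟨hD, h _ hθ't⟩

lemma rel_mem_of_not_extendsInto (hr : IsRepair db r) (ht : IsRepair db t)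
    (ih : ∀ t', IsRepair db t' → (t' \ r).card < (t \ r).card → ExtendsInto p t' θ S)
    (hnot : ¬ExtendsInto p t θ S) : ∀ h ∈ t \ r, ∃ G ∈ p, G.rel = h.rel := by
  intro h hh
  by_contra! hrel
  obtain ⟨f, -, hfh, t', ht', hlt, ht't⟩ := ht.exists_exchange hr hh
  obtain ⟨κ, hκθ, hκ⟩ := ih t' ht' hlt
  refine hnot ⟨κ, hκθ, fun G hG => ?_⟩
  have hne : G.ground κ ≠ f := fun he => hrel G hG (by rw [← hfh.1, ← he]; rfl)
  exact (Finset.mem_insert.1 (ht't (hκ G hG))).resolve_left hne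

lemma extendsInto_of_embeds_erase (hsjf : SelfJoinFree q) (htopo : IsTopoSort q)
    (ht : DBConsistent t) {F : DBAtom} (hFk : F ∈ q.drop k) {κ μ : Var → ℚ≥0}
    (hμ : Embeds q t μ) (hκθ : Set.EqOn κ θ (↑(uVars q k) ∪ ↑(headKey (q.drop k))))
    (hκ : Embeds (q.erase F) t κ) (hκF : F.ground κ ∈ t ∨ KeyEqual (F.ground κ) (F.ground μ)) :
    ExtendsInto (q.drop k) t θ (↑(uVars q k) ∪ ↑(headKey (q.drop k))) := by
  have hF := List.mem_of_mem_drop hFk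
  rcases hκF with hκF | hkey
  · refine ⟨κ, hκθ, fun G hG => ?_⟩
    by_cases hGF : G = F
    · exact hGF ▸ hκF
    · exact hκ G ((List.mem_erase_of_ne hGF).2 (List.mem_of_mem_drop hG))
  · refine ⟨_, fun v hv => ?_, (embeds_piecewise_attacksVar ht hF hκ hμ
      (DBAtom.keyEqual_ground_iff.1 hkey)).mono (List.drop_subset k q)⟩
    rw [Set.piecewise_eq_of_notMem {x | AttacksVar q F x} μ κ (htopo.not_attacksVar hsjf hFk hv)]
    exact hκθ hv

lemma NMinimal.extendsInto_of_closer (hsjf : SelfJoinFree q) (htopo : IsTopoSort q)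
    (hr : NMinimal q db r) (hθ : Embeds q r θ) (ht : IsRepair db t)
    (ih : ∀ t', IsRepair db t' → (t' \ r).card < (t \ r).card →
      ExtendsInto (q.drop k) t' θ (↑(uVars q k) ∪ ↑(headKey (q.drop k)))) :
    ExtendsInto (q.drop k) t θ (↑(uVars q k) ∪ ↑(headKey (q.drop k))) := by
  by_contra hnot
  have hrel := rel_mem_of_not_extendsInto hr.1 ht ih hnot
  have hprefix : ∀ G ∈ q, G ∉ q.drop k → G.ground θ ∈ t := fun G hG hGk =>
    ht.mem_of_forall_sdiff_rel_ne hr.1 (hθ G hG) fun h hh he =>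
      have ⟨G', hG', hG'h⟩ := hrel h hh
      hGk (hsjf.eq_of_rel_eq (List.mem_of_mem_drop hG') hG (hG'h.trans he) ▸ hG')
  obtain ⟨μ, hμt, hμr⟩ := hr.exists_embeds_not_embeds ht hθ fun hθt =>
    hnot ⟨θ, Set.eqOn_refl θ _, hθt.mono (List.drop_subset k q)⟩
  obtain ⟨F, hF, hFr⟩ : ∃ F ∈ q, F.ground μ ∉ r := by simpa [Embeds] using hμr
  have hFtr : F.ground μ ∈ t \ r := Finset.mem_sdiff.2 ⟨hμt F hF, hFr⟩
  have hFk : F ∈ q.drop k := by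
    obtain ⟨G, hG, hGF⟩ := hrel _ hFtr
    exact hsjf.eq_of_rel_eq (List.mem_of_mem_drop hG) hF hGF ▸ hG
  obtain ⟨f, -, hfF, t', ht', hlt, ht't⟩ := ht.exists_exchange hr.1 hFtr
  obtain ⟨κ, hκθ, hκ⟩ := ih t' ht' hlt
  have hκt : Embeds (q.erase F) t κ := by
    intro G hG
    obtain ⟨hGF, hGq⟩ := (hsjf.nodup.mem_erase_iff).1 hG
    by_cases hGk : G ∈ q.drop k
    · have hne : G.ground κ ≠ f := fun he =>
        hGF (hsjf.eq_of_rel_eq hGq hF (by rw [← DBAtom.rel_ground (κ := κ), he, hfF.1]; rfl))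
      exact (Finset.mem_insert.1 (ht't (hκ G hGk))).resolve_left hne
    · rw [DBAtom.ground_eq_ground_iff.2 (hκθ.mono ((Finset.coe_subset.2
        (allVars_subset_uVars hGq hGk)).trans Set.subset_union_left))]
      exact hprefix G hGq hGk
  refine hnot (extendsInto_of_embeds_erase hsjf htopo ht.2.1 hFk hμt hκθ hκt ?_)
  rcases Finset.mem_insert.1 (ht't (hκ F hFk)) with hκF | hκF
  · exact .inr (hκF ▸ hfF)
  · exact .inl hκF

lemma NMinimal.certainFrom (hsjf : SelfJoinFree q) (htopo : IsTopoSort q)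
    (hr : NMinimal q db r) (hθ : Embeds q r θ) (k : ℕ) : CertainFrom q db θ k := by
  intro t ht
  induction hn : (t \ r).card using Nat.strong_induction_on generalizing t with
  | _ n ih =>
    exact hr.extendsInto_of_closer hsjf htopo hθ ht fun t' ht' hlt =>
      ih _ (hn ▸ hlt) t' ht' rfl

theorem NMinimal.superfrugal (hsjf : SelfJoinFree q) (htopo : IsTopoSort q)
    (hr : NMinimal q db r) : Superfrugal q db r :=
  ⟨hr.1, fun _ hθ => (isForallEmb_iff (hθ.mono hr.1.1)).2 fun j _ =>
    hr.certainFrom hsjf htopo (isEmbedding_iff.1 hθ).2 j⟩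

end MinimalToSuperfrugal

/-- Superfrugal repairs are exactly the n-minimal repairs. -/
theorem stmt6
    (q : List DBAtom) (hsjf : SelfJoinFree q) (htopo : IsTopoSort q)
    (db : Finset DBFact) :
    (∀ r : Finset DBFact, Superfrugal q db r → NMinimal q db r) ∧
    (∀ r : Finset DBFact, NMinimal q db r → Superfrugal q db r) :=
  ⟨fun _ => Superfrugal.nMinimal, fun _ => NMinimal.superfrugal hsjf htopo⟩
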